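/- There exist positive constants c₁, A and A′ such that for all ξ, η ∈ 𝔠₀, if the angle 𝔄(η, ξ) ∈ [0,π] between η and ξ satisfies 𝔄(η, ξ) ≤ c₁/K_ξ, then A·K_ξ ≤ K_η ≤ A′·K_ξ. -/

import Mathlib

open Real Set

noncomputable def gfun (t : ℝ) : ℝ := (Real.sqrt (1 - t^2) - t * Real.arccos t) / Real.pi

noncomputable def Kcurv (t : ℝ) : ℝ :=
  deriv (deriv gfun) t / (1 + (deriv gfun t)^2) ^ ((3:ℝ)/2)

def cone0 : Set (ℝ × ℝ) := {x | 0 < x.1 ∧ 0 < x.2 ∧ 1 < x.2 / x.1}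

noncomputable def tpar (ξ : ℝ × ℝ) : ℝ := Real.cos (Real.pi * ξ.1 / ξ.2)

noncomputable def Kxi (ξ : ℝ × ℝ) : ℝ := Kcurv (tpar ξ)

noncomputable def enorm2 (x : ℝ × ℝ) : ℝ := Real.sqrt (x.1^2 + x.2^2)

/-- The angle in `[0, π]` between two vectors. -/
noncomputable def ang (u v : ℝ × ℝ) : ℝ :=
  Real.arccos ((u.1 * v.1 + u.2 * v.2) / (enorm2 u * enorm2 v))

/-!
On `𝔠₀` the ratio `r = ξ₁/ξ₂` lies in `(0, 1)`, `t(ξ) = cos (π r)` and `g'' = 1/(π√(1-t²))`, so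
`1/K_ξ = π sin (π r) (1 + r²)^{3/2}`, which is comparable to the distance `min r (1 - r)` of `r`
to the ends of `(0, 1)`. The ratio map is Lipschitz in the angle on `𝔠₀`, so for
`𝔄(η, ξ) ≤ c₁/K_ξ` with `c₁` small, `η₁/η₂` stays within half that distance of `r`; hence the two
distances, and with them the two curvatures, are comparable.
-/

lemma hasDerivAt_gfun {t : ℝ} (h₁ : -1 < t) (h₂ : t < 1) :
    HasDerivAt gfun (-arccos t / π) t := by
  have hs : 0 < 1 - t ^ 2 := by nlinarith
  have hsqrt : HasDerivAt (fun s : ℝ => √(1 - s ^ 2)) (1 / (2 * √(1 - t ^ 2)) * -(2 * t)) t :=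
    (hasDerivAt_sqrt hs.ne').comp t (by simpa using (hasDerivAt_pow 2 t).const_sub 1)
  have hmul : HasDerivAt (fun s : ℝ => s * arccos s) (1 * arccos t + t * -(1 / √(1 - t ^ 2))) t :=
    (hasDerivAt_id t).mul (hasDerivAt_arccos h₁.ne' h₂.ne)
  refine ((hsqrt.sub hmul).div_const π).congr_deriv ?_
  have : √(1 - t ^ 2) ≠ 0 := by positivity
  field_simp
  ring

lemma deriv_deriv_gfun {t : ℝ} (h₁ : -1 < t) (h₂ : t < 1) :
    deriv (deriv gfun) t = 1 / (π * √(1 - t ^ 2)) := by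
  have hev : deriv gfun =ᶠ[nhds t] fun s => -arccos s / π := by
    filter_upwards [Ioo_mem_nhds h₁ h₂] with s hs
    exact (hasDerivAt_gfun hs.1 hs.2).deriv
  rw [hev.deriv_eq]
  refine ((hasDerivAt_arccos h₁.ne' h₂.ne).neg.div_const π).deriv.trans ?_
  field_simp

lemma Kcurv_cos {θ : ℝ} (h₀ : 0 < θ) (hπ : θ < π) :
    Kcurv (cos θ) = 1 / (π * sin θ * (1 + (θ / π) ^ 2) ^ ((3 : ℝ) / 2)) := by
  have h₁ : -1 < cos θ := by simpa using cos_lt_cos_of_nonneg_of_le_pi h₀.le le_rfl hπ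
  have h₂ : cos θ < 1 := by simpa using cos_lt_cos_of_nonneg_of_le_pi le_rfl hπ.le h₀
  have hsqrt : √(1 - cos θ ^ 2) = sin θ := by
    rw [← sin_sq, sqrt_sq (sin_pos_of_pos_of_lt_pi h₀ hπ).le]
  rw [Kcurv, deriv_deriv_gfun h₁ h₂, (hasDerivAt_gfun h₁ h₂).deriv, hsqrt, arccos_cos h₀.le hπ.le,
    neg_div, neg_sq, div_div]

lemma div_mem_Ioo_of_mem_cone0 {ξ : ℝ × ℝ} (hξ : ξ ∈ cone0) : ξ.1 / ξ.2 ∈ Ioo (0 : ℝ) 1 := by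
  obtain ⟨h₁, h₂, h₃⟩ := hξ
  exact ⟨by positivity, (div_lt_one h₂).2 (by linarith [(one_lt_div h₁).1 h₃])⟩

lemma inv_Kxi_eq {ξ : ℝ × ℝ} (hξ : ξ ∈ cone0) :
    (Kxi ξ)⁻¹ = π * sin (π * (ξ.1 / ξ.2)) * (1 + (ξ.1 / ξ.2) ^ 2) ^ ((3 : ℝ) / 2) := by
  obtain ⟨hr₀, hr₁⟩ := div_mem_Ioo_of_mem_cone0 hξ
  have hθ : π * (ξ.1 / ξ.2) < π := mul_lt_of_lt_one_right pi_pos hr₁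
  rw [Kxi, tpar, mul_div_assoc, Kcurv_cos (by positivity) hθ, mul_div_cancel_left₀ _ pi_ne_zero,
    one_div, inv_inv]

lemma one_add_sq_rpow_le_four {r : ℝ} (h₀ : 0 ≤ r) (h₁ : r ≤ 1) :
    (1 + r ^ 2) ^ ((3 : ℝ) / 2) ≤ 4 := by
  calc (1 + r ^ 2) ^ ((3 : ℝ) / 2) ≤ (1 + r ^ 2) ^ (2 : ℝ) :=
        rpow_le_rpow_of_exponent_le (by nlinarith) (by norm_num)
    _ ≤ 4 := by rw [rpow_two]; nlinarith [pow_le_one₀ h₀ h₁ (n := 2)]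

lemma sin_pi_mul_mem_Icc {r : ℝ} (h₀ : 0 ≤ r) (h₁ : r ≤ 1) :
    sin (π * r) ∈ Icc (2 * min r (1 - r)) (π * min r (1 - r)) := by
  have hsymm : sin (π * r) = sin (π * (1 - r)) := by rw [mul_one_sub, sin_pi_sub]
  have jordan : ∀ x, 0 ≤ x → x ≤ 1 / 2 → sin (π * x) ∈ Icc (2 * x) (π * x) := fun x hx₀ hx₁ =>
    ⟨by simpa [field] using mul_le_sin (x := π * x) (by positivity) (by nlinarith [pi_pos]),
      sin_le (by positivity)⟩
  rcases le_total r (1 - r) with h | h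
  · rw [min_eq_left h]
    exact jordan r h₀ (by linarith)
  · rw [min_eq_right h, hsymm]
    exact jordan (1 - r) (by linarith) (by linarith)

lemma min_one_sub_mem_Icc_of_abs_sub_le {r s : ℝ} (h : |s - r| ≤ min r (1 - r) / 2) :
    min s (1 - s) ∈ Icc (min r (1 - r) / 2) (3 / 2 * min r (1 - r)) := by
  have hlip : |min s (1 - s) - min r (1 - r)| ≤ min r (1 - r) / 2 := by
    refine (abs_min_sub_min_le_max _ _ _ _).trans ?_
    rwa [sub_sub_sub_cancel_left, abs_sub_comm r, max_self]
  constructor <;> linarith [abs_le.1 hlip]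

lemma Kxi_pos {ξ : ℝ × ℝ} (hξ : ξ ∈ cone0) : 0 < Kxi ξ := by
  obtain ⟨hr₀, hr₁⟩ := div_mem_Ioo_of_mem_cone0 hξ
  have hsin : 0 < sin (π * (ξ.1 / ξ.2)) :=
    sin_pos_of_pos_of_lt_pi (by positivity) (mul_lt_of_lt_one_right pi_pos hr₁)
  rw [← inv_pos, inv_Kxi_eq hξ]
  positivity

lemma inv_Kxi_mem_Icc {ξ : ℝ × ℝ} (hξ : ξ ∈ cone0) :
    (Kxi ξ)⁻¹ ∈ Icc (2 * π * min (ξ.1 / ξ.2) (1 - ξ.1 / ξ.2))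
      (4 * π ^ 2 * min (ξ.1 / ξ.2) (1 - ξ.1 / ξ.2)) := by
  rw [inv_Kxi_eq hξ]
  obtain ⟨hr₀, hr₁⟩ := div_mem_Ioo_of_mem_cone0 hξ
  set r := ξ.1 / ξ.2
  obtain ⟨hsin₀, hsin₁⟩ := sin_pi_mul_mem_Icc hr₀.le hr₁.le
  have hP₀ : 1 ≤ (1 + r ^ 2) ^ ((3 : ℝ) / 2) := one_le_rpow (by nlinarith) (by norm_num)
  have hP₁ := one_add_sq_rpow_le_four hr₀.le hr₁.le
  have hm : 0 ≤ min r (1 - r) := le_min hr₀.le (by linarith)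
  have hπ := pi_pos
  constructor
  · nlinarith [mul_le_mul hsin₀ hP₀ zero_le_one (by linarith)]
  · nlinarith [mul_le_mul hsin₁ hP₁ (by positivity) (by positivity)]

lemma sin_ang {u v : ℝ × ℝ} (hu : 0 < enorm2 u) (hv : 0 < enorm2 v) :
    sin (ang u v) = |u.1 * v.2 - u.2 * v.1| / (enorm2 u * enorm2 v) := by
  have hN : (enorm2 u * enorm2 v) ^ 2 = (u.1 ^ 2 + u.2 ^ 2) * (v.1 ^ 2 + v.2 ^ 2) := by
    rw [mul_pow, enorm2, enorm2, sq_sqrt (by positivity), sq_sqrt (by positivity)]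
  -- Lagrange's identity `(ac + bd)² + (ad - bc)² = (a² + b²)(c² + d²)`
  have hlagrange : 1 - ((u.1 * v.1 + u.2 * v.2) / (enorm2 u * enorm2 v)) ^ 2
      = ((u.1 * v.2 - u.2 * v.1) / (enorm2 u * enorm2 v)) ^ 2 := by
    field_simp
    linear_combination hN
  rw [ang, sin_arccos, hlagrange, sqrt_sq_eq_abs, abs_div, abs_of_pos (mul_pos hu hv)]

lemma enorm2_le_sqrt_two_mul {x : ℝ × ℝ} (h : |x.1| ≤ x.2) : enorm2 x ≤ √2 * x.2 := by
  calc enorm2 x ≤ √(2 * x.2 ^ 2) := sqrt_le_sqrt (by nlinarith [sq_abs x.1, abs_nonneg x.1])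
    _ = √2 * x.2 := by rw [sqrt_mul zero_le_two, sqrt_sq ((abs_nonneg _).trans h)]

lemma abs_div_sub_div_le_two_mul_ang {ξ η : ℝ × ℝ} (hξ : ξ ∈ cone0) (hη : η ∈ cone0) :
    |η.1 / η.2 - ξ.1 / ξ.2| ≤ 2 * ang η ξ := by
  obtain ⟨hξ₁, hξ₂, hξ₃⟩ := hξ
  obtain ⟨hη₁, hη₂, hη₃⟩ := hη
  have hξle : |ξ.1| ≤ ξ.2 := by rw [abs_of_pos hξ₁]; linarith [(one_lt_div hξ₁).1 hξ₃]
  have hηle : |η.1| ≤ η.2 := by rw [abs_of_pos hη₁]; linarith [(one_lt_div hη₁).1 hη₃]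
  have hξN : 0 < enorm2 ξ := sqrt_pos.2 (by positivity)
  have hηN : 0 < enorm2 η := sqrt_pos.2 (by positivity)
  have hN : enorm2 η * enorm2 ξ ≤ 2 * (η.2 * ξ.2) := by
    calc enorm2 η * enorm2 ξ ≤ (√2 * η.2) * (√2 * ξ.2) :=
          mul_le_mul (enorm2_le_sqrt_two_mul hηle) (enorm2_le_sqrt_two_mul hξle) hξN.le
            (by positivity)
      _ = 2 * (η.2 * ξ.2) := by rw [mul_mul_mul_comm, mul_self_sqrt zero_le_two]
  calc |η.1 / η.2 - ξ.1 / ξ.2| = |η.1 * ξ.2 - η.2 * ξ.1| / (η.2 * ξ.2) := by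
        rw [div_sub_div _ _ hη₂.ne' hξ₂.ne', abs_div, abs_of_pos (mul_pos hη₂ hξ₂)]
    _ ≤ 2 * (|η.1 * ξ.2 - η.2 * ξ.1| / (enorm2 η * enorm2 ξ)) := by
        rw [← mul_div_assoc, div_le_div_iff₀ (by positivity) (by positivity)]
        nlinarith [abs_nonneg (η.1 * ξ.2 - η.2 * ξ.1)]
    _ = 2 * sin (ang η ξ) := by rw [sin_ang hηN hξN]
    _ ≤ 2 * ang η ξ := by gcongr; exact sin_le (arccos_nonneg _)

theorem curvature_comparable_in_small_angle :
    ∃ c₁ A A' : ℝ, 0 < c₁ ∧ 0 < A ∧ 0 < A' ∧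
      ∀ ξ ∈ cone0, ∀ η ∈ cone0, ang η ξ ≤ c₁ / Kxi ξ →
        A * Kxi ξ ≤ Kxi η ∧ Kxi η ≤ A' * Kxi ξ := by
  have hπ := pi_pos
  refine ⟨1 / (16 * π ^ 2), 1 / (3 * π), 4 * π, by positivity, by positivity, by positivity, ?_⟩
  intro ξ hξ η hη hang
  have hK := Kxi_pos hξ
  have hK' := Kxi_pos hη
  obtain ⟨hξ₀, hξ₁⟩ := inv_Kxi_mem_Icc hξ
  obtain ⟨hη₀, hη₁⟩ := inv_Kxi_mem_Icc hη
  set m := min (ξ.1 / ξ.2) (1 - ξ.1 / ξ.2)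
  set n := min (η.1 / η.2) (1 - η.1 / η.2)
  have hclose : |η.1 / η.2 - ξ.1 / ξ.2| ≤ m / 2 :=
    calc |η.1 / η.2 - ξ.1 / ξ.2| ≤ 2 * ang η ξ := abs_div_sub_div_le_two_mul_ang hξ hη
      _ ≤ 2 * (1 / (16 * π ^ 2) * (Kxi ξ)⁻¹) := by rw [← div_eq_mul_inv]; gcongr
      _ ≤ 2 * (1 / (16 * π ^ 2) * (4 * π ^ 2 * m)) := by gcongr
      _ = m / 2 := by field_simp; ring
  obtain ⟨hnm₀, hnm₁⟩ := min_one_sub_mem_Icc_of_abs_sub_le hclose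
  refine ⟨(inv_le_inv₀ hK' (by positivity)).1 ?_, (inv_le_inv₀ (by positivity) hK').1 ?_⟩
  · calc (Kxi η)⁻¹ ≤ 4 * π ^ 2 * n := hη₁
      _ ≤ 4 * π ^ 2 * (3 / 2 * m) := by gcongr
      _ = 3 * π * (2 * π * m) := by ring
      _ ≤ 3 * π * (Kxi ξ)⁻¹ := by gcongr
      _ = (1 / (3 * π) * Kxi ξ)⁻¹ := by field_simp
  · calc (4 * π * Kxi ξ)⁻¹ = (4 * π)⁻¹ * (Kxi ξ)⁻¹ := mul_inv _ _
      _ ≤ (4 * π)⁻¹ * (4 * π ^ 2 * m) := by gcongr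
      _ ≤ (4 * π)⁻¹ * (4 * π ^ 2 * (2 * n)) := by gcongr; linarith
      _ = 2 * π * n := by field_simp
      _ ≤ (Kxi η)⁻¹ := hη₀
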